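/- Let B^e be a noncrossing matching on E_n = {0,2,...,4n-2} and B^o a noncrossing matching on O_n = {1,3,...,4n-1}. Then the total number of crossing pairs (e,o) with e in B^e and o in B^o is at least n. -/

import Mathlib

open scoped Classical

def IsMatchingOn (M : Finset (Finset ℕ)) (S : Finset ℕ) : Prop :=
  (∀ b ∈ M, b.card = 2) ∧
  (∀ b ∈ M, ∀ b' ∈ M, b ≠ b' → Disjoint b b') ∧
  (∀ x, x ∈ S ↔ ∃ b ∈ M, x ∈ b)

def Cross (e o : Finset ℕ) : Prop :=
  (∃ i ∈ e, ∃ k ∈ e, ∃ j ∈ o, ∃ l ∈ o, i < j ∧ j < k ∧ k < l) ∨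
  (∃ i ∈ o, ∃ k ∈ o, ∃ j ∈ e, ∃ l ∈ e, i < j ∧ j < k ∧ k < l)

def IsNCMatchingOn (M : Finset (Finset ℕ)) (S : Finset ℕ) : Prop :=
  IsMatchingOn M S ∧ ∀ b ∈ M, ∀ b' ∈ M, b ≠ b' → ¬ Cross b b'

def En (n : ℕ) : Finset ℕ := (Finset.range (2 * n)).image (fun i => 2 * i)

def On (n : ℕ) : Finset ℕ := (Finset.range (2 * n)).image (fun i => 2 * i + 1)

def IsBasketball (n : ℕ) (Be Bo : Finset (Finset ℕ)) : Prop :=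
  IsNCMatchingOn Be (En n) ∧ IsNCMatchingOn Bo (On n) ∧
  ∀ e ∈ Be, (Bo.filter (fun o => Cross e o)).card = 1

def IsNCPartitionOn (Q : Finset (Finset ℕ)) (S : Finset ℕ) : Prop :=
  (∀ b ∈ Q, b.Nonempty) ∧
  (∀ b ∈ Q, ∀ b' ∈ Q, b ≠ b' → Disjoint b b') ∧
  (∀ x, x ∈ S ↔ ∃ b ∈ Q, x ∈ b) ∧
  (∀ b ∈ Q, ∀ b' ∈ Q, b ≠ b' → ¬ Cross b b')

/-!
Every block `{i, k}` of `B^e` crosses some block of `B^o`, so the crossing pairs project onto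
`B^e`, which has `n` blocks. Indeed, if `{i, k}` crossed no block of `B^o`, then every block of
`B^o`, and by noncrossingness every other block of `B^e`, that meets the open interval `(i, k)`
would lie inside it. Both matchings would then cover an even number of its points; but together
they cover all `k - i - 1` of them, which is odd since `i` and `k` are even.
-/

open Finset

namespace IsMatchingOn

variable {M : Finset (Finset ℕ)} {S : Finset ℕ}

lemma card_eq (h : IsMatchingOn M S) : #S = 2 * #M := by
  obtain ⟨hcard, hdisj, hcov⟩ := h
  have hS : S = M.biUnion fun b ↦ b := by
    ext x
    simpa using hcov x
  rw [hS, card_biUnion hdisj, sum_congr rfl hcard, sum_const, smul_eq_mul, mul_comm]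

lemma even_card_inter {T : Finset ℕ} (h : IsMatchingOn M S)
    (hT : ∀ b ∈ M, ∀ x ∈ b, x ∈ T → b ⊆ T) : Even #(S ∩ T) := by
  obtain ⟨hcard, hdisj, hcov⟩ := h
  have hST : S ∩ T = (M.filter (· ⊆ T)).biUnion fun b ↦ b := by
    ext x
    simp only [mem_inter, mem_biUnion, mem_filter, hcov x]
    constructor
    · rintro ⟨⟨b, hb, hxb⟩, hxT⟩
      exact ⟨b, ⟨hb, hT b hb x hxb hxT⟩, hxb⟩
    · rintro ⟨b, ⟨hb, hbT⟩, hxb⟩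
      exact ⟨⟨b, hb, hxb⟩, hbT hxb⟩
  rw [hST, card_biUnion fun b hb b' hb' ↦ hdisj b (mem_filter.1 hb).1 b' (mem_filter.1 hb').1,
    sum_congr rfl fun b hb ↦ hcard b (mem_filter.1 hb).1, sum_const, smul_eq_mul]
  exact even_two.mul_left _

end IsMatchingOn

lemma mem_En {n x : ℕ} : x ∈ En n ↔ Even x ∧ x < 4 * n := by
  simp only [En, mem_image, mem_range]
  constructor
  · rintro ⟨i, hi, rfl⟩
    exact ⟨even_two_mul i, by omega⟩
  · rintro ⟨⟨i, rfl⟩, hx⟩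
    exact ⟨i, by omega, by ring⟩

lemma mem_On {n x : ℕ} : x ∈ On n ↔ Odd x ∧ x < 4 * n := by
  simp only [On, mem_image, mem_range]
  constructor
  · rintro ⟨i, hi, rfl⟩
    exact ⟨odd_two_mul_add_one i, by omega⟩
  · rintro ⟨⟨i, rfl⟩, hx⟩
    exact ⟨i, by omega, rfl⟩

lemma card_En (n : ℕ) : #(En n) = 2 * n := by
  rw [En, card_image_of_injective _ fun a b h ↦ by omega, card_range]

lemma card_En_inter_add_card_On_inter {n : ℕ} {I : Finset ℕ} (hI : I ⊆ range (4 * n)) :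
    #(En n ∩ I) + #(On n ∩ I) = #I := by
  have hdisj : Disjoint (En n ∩ I) (On n ∩ I) := by
    refine disjoint_left.2 fun x hxE hxO ↦ ?_
    exact Nat.not_even_iff_odd.2 (mem_On.1 (mem_inter.1 hxO).1).1 (mem_En.1 (mem_inter.1 hxE).1).1
  have hunion : En n ∩ I ∪ On n ∩ I = I := by
    ext x
    have hx : x ∈ I → x < 4 * n := fun h ↦ mem_range.1 (hI h)
    simp only [mem_union, mem_inter, mem_En, mem_On]
    rcases Nat.even_or_odd x with h | h
    · simp only [h, Nat.not_odd_iff_even.2 h]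
      tauto
    · simp only [h, Nat.not_even_iff_odd.2 h]
      tauto
  rw [← card_union_of_disjoint hdisj, hunion]

lemma subset_Ioo_of_not_cross {i k x : ℕ} {b : Finset ℕ} (hb : ¬ Cross {i, k} b)
    (hi : i ∉ b) (hk : k ∉ b) (hx : x ∈ b) (hxik : x ∈ Ioo i k) : b ⊆ Ioo i k := by
  intro y hy
  obtain ⟨hix, hxk⟩ := mem_Ioo.1 hxik
  have hyi : y ≠ i := fun h ↦ hi (h ▸ hy)
  have hyk : y ≠ k := fun h ↦ hk (h ▸ hy)
  refine mem_Ioo.2 ⟨?_, ?_⟩ <;> by_contra hy'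
  · exact hb (Or.inr ⟨y, hy, x, hx, i, by simp, k, by simp, by omega, hix, hxk⟩)
  · exact hb (Or.inl ⟨i, by simp, k, by simp, x, hx, y, hy, hix, hxk, by omega⟩)

lemma exists_cross_of_mem {n : ℕ} {Be Bo : Finset (Finset ℕ)}
    (hBe : IsNCMatchingOn Be (En n)) (hBo : IsNCMatchingOn Bo (On n))
    {e : Finset ℕ} (he : e ∈ Be) : ∃ o ∈ Bo, Cross e o := by
  obtain ⟨a, c, hac, rfl⟩ := card_eq_two.1 (hBe.1.1 _ he)
  wlog hlt : a < c generalizing a c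
  · exact pair_comm a c ▸ this c a hac.symm (pair_comm a c ▸ he) (by omega)
  by_contra! hnone
  obtain ⟨ha, -⟩ := mem_En.1 <| (hBe.1.2.2 a).2 ⟨_, he, by simp⟩
  obtain ⟨hc, hc4⟩ := mem_En.1 <| (hBe.1.2.2 c).2 ⟨_, he, by simp⟩
  have hOn : Even #(On n ∩ Ioo a c) := hBo.1.even_card_inter fun o ho x hx hxI ↦ by
    have hodd : ∀ y ∈ o, Odd y := fun y hy ↦ (mem_On.1 <| (hBo.1.2.2 y).2 ⟨o, ho, hy⟩).1
    refine subset_Ioo_of_not_cross (hnone o ho) (fun h ↦ ?_) (fun h ↦ ?_) hx hxI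
    · exact Nat.not_odd_iff_even.2 ha (hodd a h)
    · exact Nat.not_odd_iff_even.2 hc (hodd c h)
  have hEn : Even #(En n ∩ Ioo a c) := hBe.1.even_card_inter fun b hb x hx hxI ↦ by
    have hne : {a, c} ≠ b := by
      rintro rfl
      simp only [mem_insert, mem_singleton, mem_Ioo] at hx hxI
      omega
    have hdisj := disjoint_left.1 (hBe.1.2.1 _ he b hb hne)
    exact subset_Ioo_of_not_cross (hBe.2 _ he b hb hne) (hdisj (by simp)) (hdisj (by simp)) hx hxI
  have hcard := card_En_inter_add_card_On_inter (n := n) (I := Ioo a c)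
    fun x hx ↦ mem_range.2 ((mem_Ioo.1 hx).2.trans hc4)
  rw [Nat.card_Ioo] at hcard
  obtain ⟨p, hp⟩ := hOn
  obtain ⟨q, hq⟩ := hEn
  obtain ⟨r, rfl⟩ := ha
  obtain ⟨s, rfl⟩ := hc
  omega

theorem stmt_3 (n : ℕ) (Be Bo : Finset (Finset ℕ))
    (hBe : IsNCMatchingOn Be (En n)) (hBo : IsNCMatchingOn Bo (On n)) :
    n ≤ ((Be ×ˢ Bo).filter (fun p => Cross p.1 p.2)).card := by
  have hcard : #Be = n := by
    have := hBe.1.card_eq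
    rw [card_En] at this
    omega
  rw [← hcard]
  refine card_le_card_of_surjOn Prod.fst fun e he ↦ ?_
  obtain ⟨o, ho, hcross⟩ := exists_cross_of_mem hBe hBo he
  exact ⟨(e, o), mem_filter.2 ⟨mem_product.2 ⟨he, ho⟩, hcross⟩, rfl⟩
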